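/- arXiv:2202.13707 — 6 statements merged into one kernel-verified Lean document; each statement's English description precedes it below -/
import Mathlib

section
/- Let A be a symmetric positive definite n×n real matrix and B an m×n real matrix. Then for every vector λ ∈ ℝ^m, the norm of λ with respect to M₀ := B A⁻¹ Bᵀ satisfies ‖λ‖_{M₀} = sup over nonzero w ∈ ℝ^n of (Bw, λ)_{ℓ²} / ‖w‖_A, where ‖w‖_A := √(wᵀ A w) and ‖λ‖_{M₀} := √(λᵀ M₀ λ). -/
/-!
With `v = A⁻¹ Bᵀ λ` one has `(B w, λ) = wᵀ A v` and `λᵀ M₀ λ = vᵀ A v`, so the claim is the dual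
description of the `A`-norm of `v`: by Cauchy–Schwarz for the form `A` every quotient is at most
`‖v‖_A`, and `w = v` attains this bound.
-/

open Matrix

namespace LinearMap.BilinForm

variable {M : Type*} [AddCommGroup M] [Module ℝ M]

theorem apply_le_sqrt_mul_sqrt (B : LinearMap.BilinForm ℝ M) (hB : B.IsSymm)
    (hs : ∀ x, 0 ≤ B x x) (x y : M) : B x y ≤ √(B x x) * √(B y y) := by
  rw [← Real.sqrt_mul (hs x)]
  exact Real.le_sqrt_of_sq_le (B.apply_sq_le_of_symm hs (isSymm_iff.1 hB) x y)

theorem iSup_apply_div_sqrt (B : LinearMap.BilinForm ℝ M) (hB : B.IsSymm)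
    (hpos : ∀ x, x ≠ 0 → 0 < B x x) (v : M) :
    ⨆ w : {w : M // w ≠ 0}, B w v / √(B w w) = √(B v v) := by
  have hs : ∀ x, 0 ≤ B x x := fun x ↦ by
    rcases eq_or_ne x 0 with rfl | hx
    · simp
    · exact (hpos x hx).le
  rcases eq_or_ne v 0 with rfl | hv
  · simp
  have hle : ∀ w : {w : M // w ≠ 0}, B w v / √(B w w) ≤ √(B v v) := fun ⟨w, hw⟩ ↦ by
    rw [div_le_iff₀' (Real.sqrt_pos.mpr (hpos w hw))]
    exact B.apply_le_sqrt_mul_sqrt hB hs w v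
  have hattained : B v v / √(B v v) = √(B v v) := Real.div_sqrt
  have : Nonempty {w : M // w ≠ 0} := ⟨⟨v, hv⟩⟩
  exact le_antisymm (ciSup_le hle)
    (le_ciSup_of_le ⟨_, Set.forall_mem_range.2 hle⟩ ⟨v, hv⟩ hattained.ge)

end LinearMap.BilinForm

theorem Matrix.mulVec_dotProduct_eq_dotProduct_mulVec_inv {ι κ R : Type*} [Fintype ι]
    [Fintype κ] [DecidableEq ι] [CommRing R] {A : Matrix ι ι R} (hA : IsUnit A.det)
    (B : Matrix κ ι R) (w : ι → R) (lam : κ → R) :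
    B *ᵥ w ⬝ᵥ lam = w ⬝ᵥ A *ᵥ (A⁻¹ *ᵥ Bᵀ *ᵥ lam) := by
  rw [mulVec_mulVec, mul_nonsing_inv _ hA, one_mulVec, dotProduct_comm, dotProduct_mulVec,
    mulVec_transpose, dotProduct_comm]

theorem stmt0 {n m : ℕ} (A : Matrix (Fin n) (Fin n) ℝ) (B : Matrix (Fin m) (Fin n) ℝ)
    (hA : A.PosDef) (lam : Fin m → ℝ) :
    Real.sqrt (lam ⬝ᵥ (B * A⁻¹ * Bᵀ) *ᵥ lam) =
      ⨆ w : {w : Fin n → ℝ // w ≠ 0},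
        (B *ᵥ (w : Fin n → ℝ) ⬝ᵥ lam) / Real.sqrt ((w : Fin n → ℝ) ⬝ᵥ A *ᵥ (w : Fin n → ℝ)) := by
  set v := A⁻¹ *ᵥ Bᵀ *ᵥ lam
  have hterm (w : Fin n → ℝ) : B *ᵥ w ⬝ᵥ lam = w ⬝ᵥ A *ᵥ v :=
    mulVec_dotProduct_eq_dotProduct_mulVec_inv hA.det_pos.ne'.isUnit B w lam
  have hnorm : lam ⬝ᵥ (B * A⁻¹ * Bᵀ) *ᵥ lam = v ⬝ᵥ A *ᵥ v := by
    rw [← hterm, dotProduct_comm, mulVec_mulVec, mulVec_mulVec]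
  simp_rw [hterm, hnorm, ← toBilin'_apply']
  refine (LinearMap.BilinForm.iSup_apply_div_sqrt _ ?_ (fun x hx ↦ ?_) v).symm
  · exact isSymm_toBilin'_iff_isSymm.2 (isHermitian_iff_isSymm.1 hA.isHermitian)
  · simpa [toBilin'_apply'] using hA.dotProduct_mulVec_pos hx
end

section
/- Let A ∈ ℝ^{n×n} be symmetric positive definite, B ∈ ℝ^{m₁×n}, and C ∈ ℝ^{m₂×n} such that the block matrix K := [[A, Cᵀ],[C, 0]] is invertible. Define M₁ := [B 0] K⁻¹ [Bᵀ; 0] and W₁ := {w ∈ ℝ^n : Cw = 0}. Then for all λ ∈ ℝ^{m₁}, √(λᵀ M₁ λ) = sup over nonzero w ∈ W₁ of (Bw, λ)_{ℓ²} / √(wᵀ A w). -/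
/-!
Let `(u, p)` solve the saddle point system `A u + Cᵀ p = Bᵀ λ`, `C u = 0`. For `w ∈ ker C` the
multiplier term drops out, so `(B w, λ) = wᵀ A u`; in particular `λᵀ M₁ λ = uᵀ A u`. The right-hand
side is therefore the dual norm of `w ↦ wᵀ A u` on `ker C` in the energy norm `√(wᵀ A w)`, which by
Cauchy–Schwarz equals `√(uᵀ A u)`, attained at `w = u` (and both sides vanish when `u = 0`).
-/

namespace Matrix

section

variable {l m n o p : Type*} {R : Type*}

theorem fromBlocks_mulVec_eq_sumElim_iff [Fintype l] [Fintype m] [NonUnitalNonAssocSemiring R]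
    {A : Matrix n l R} {B : Matrix n m R} {C : Matrix o l R} {D : Matrix o m R}
    {x : l ⊕ m → R} {f : n → R} {g : o → R} :
    fromBlocks A B C D *ᵥ x = Sum.elim f g ↔
      A *ᵥ (x ∘ Sum.inl) + B *ᵥ (x ∘ Sum.inr) = f ∧ C *ᵥ (x ∘ Sum.inl) + D *ᵥ (x ∘ Sum.inr) = g := by
  rw [fromBlocks_mulVec, Sum.elim_eq_iff]

theorem mulVec_dotProduct_eq_of_kkt [Fintype m] [Fintype n] [Fintype p] [CommSemiring R]
    {A : Matrix n n R} {B : Matrix m n R} {C : Matrix p n R} {u w : n → R} {q : p → R}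
    {lam : m → R} (hkkt : A *ᵥ u + Cᵀ *ᵥ q = Bᵀ *ᵥ lam) (hw : C *ᵥ w = 0) :
    B *ᵥ w ⬝ᵥ lam = w ⬝ᵥ A *ᵥ u :=
  calc B *ᵥ w ⬝ᵥ lam = w ⬝ᵥ Bᵀ *ᵥ lam := by rw [dotProduct_mulVec, vecMul_transpose]
    _ = w ⬝ᵥ A *ᵥ u + w ⬝ᵥ Cᵀ *ᵥ q := by rw [← hkkt, dotProduct_add]
    _ = w ⬝ᵥ A *ᵥ u := by
      rw [dotProduct_mulVec w Cᵀ, vecMul_transpose, hw, zero_dotProduct, add_zero]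

end

variable {n : Type*} [Fintype n] {A : Matrix n n ℝ}

theorem PosSemidef.dotProduct_mulVec_sq_le (hA : A.PosSemidef) (x y : n → ℝ) :
    (x ⬝ᵥ A *ᵥ y) ^ 2 ≤ (x ⬝ᵥ A *ᵥ x) * (y ⬝ᵥ A *ᵥ y) := by
  let := A.toSeminormedAddCommGroup hA
  let := A.toInnerProductSpace hA
  have inner_eq (u v : n → ℝ) : inner ℝ u v = u ⬝ᵥ A *ᵥ v := by rw [dotProduct_comm]; rfl
  simpa only [inner_eq, sq] using real_inner_mul_inner_self_le x y

theorem PosSemidef.dotProduct_mulVec_div_sqrt_le (hA : A.PosSemidef) {x : n → ℝ}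
    (hx : 0 < x ⬝ᵥ A *ᵥ x) (u : n → ℝ) :
    x ⬝ᵥ A *ᵥ u / √(x ⬝ᵥ A *ᵥ x) ≤ √(u ⬝ᵥ A *ᵥ u) := by
  rw [div_le_iff₀ (Real.sqrt_pos.2 hx), ← Real.sqrt_mul' _ hx.le, mul_comm]
  exact Real.le_sqrt_of_sq_le (hA.dotProduct_mulVec_sq_le x u)

theorem PosDef.sqrt_dotProduct_mulVec_eq_iSup (hA : A.PosDef) (P : (n → ℝ) → Prop) {u : n → ℝ}
    (hu : P u) :
    √(u ⬝ᵥ A *ᵥ u) = ⨆ w : {w : n → ℝ // P w ∧ w ≠ 0},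
      (w : n → ℝ) ⬝ᵥ A *ᵥ u / √((w : n → ℝ) ⬝ᵥ A *ᵥ (w : n → ℝ)) := by
  rcases eq_or_ne u 0 with rfl | hu0
  · simp
  have hpos (w : {w : n → ℝ // P w ∧ w ≠ 0}) : 0 < (w : n → ℝ) ⬝ᵥ A *ᵥ (w : n → ℝ) := by
    simpa only [star_trivial] using hA.dotProduct_mulVec_pos w.2.2
  have hle (w : {w : n → ℝ // P w ∧ w ≠ 0}) :=
    hA.posSemidef.dotProduct_mulVec_div_sqrt_le (hpos w) u
  have : Nonempty {w : n → ℝ // P w ∧ w ≠ 0} := ⟨⟨u, hu, hu0⟩⟩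
  refine le_antisymm ?_ (ciSup_le hle)
  refine le_ciSup_of_le ⟨_, Set.forall_mem_range.2 hle⟩ ⟨u, hu, hu0⟩ ?_
  rw [Real.div_sqrt]

end Matrix

open Matrix

theorem stmt1 {n m1 m2 : ℕ} (A : Matrix (Fin n) (Fin n) ℝ)
    (B : Matrix (Fin m1) (Fin n) ℝ) (C : Matrix (Fin m2) (Fin n) ℝ)
    (hA : A.PosDef)
    (hK : IsUnit (Matrix.fromBlocks A Cᵀ C (0 : Matrix (Fin m2) (Fin m2) ℝ)).det)
    (lam : Fin m1 → ℝ) :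
    Real.sqrt (lam ⬝ᵥ
        ((Matrix.of fun i => Sum.elim (B i) (0 : Fin m2 → ℝ)) *
          (Matrix.fromBlocks A Cᵀ C (0 : Matrix (Fin m2) (Fin m2) ℝ))⁻¹ *
          (Matrix.of fun i => Sum.elim (B i) (0 : Fin m2 → ℝ))ᵀ) *ᵥ lam) =
      ⨆ w : {w : Fin n → ℝ // C *ᵥ w = 0 ∧ w ≠ 0},
        (B *ᵥ (w : Fin n → ℝ) ⬝ᵥ lam) /
          Real.sqrt ((w : Fin n → ℝ) ⬝ᵥ A *ᵥ (w : Fin n → ℝ)) := by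
  set K := fromBlocks A Cᵀ C (0 : Matrix (Fin m2) (Fin m2) ℝ)
  set E := Matrix.fromCols B (0 : Matrix (Fin m1) (Fin m2) ℝ)
  set s := K⁻¹ *ᵥ Sum.elim (Bᵀ *ᵥ lam) 0
  obtain ⟨hkkt, hCu⟩ := fromBlocks_mulVec_eq_sumElim_iff.1
    (show K *ᵥ s = Sum.elim (Bᵀ *ᵥ lam) 0 by rw [mulVec_mulVec, mul_nonsing_inv _ hK, one_mulVec])
  rw [zero_mulVec, add_zero] at hCu
  have hnum {w : Fin n → ℝ} (hw : C *ᵥ w = 0) := mulVec_dotProduct_eq_of_kkt (lam := lam) hkkt hw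
  have hM : lam ⬝ᵥ (E * K⁻¹ * Eᵀ) *ᵥ lam = (s ∘ Sum.inl) ⬝ᵥ A *ᵥ (s ∘ Sum.inl) := by
    rw [← mulVec_mulVec, ← mulVec_mulVec, transpose_fromCols, transpose_zero, fromRows_mulVec,
      zero_mulVec, fromCols_mulVec, zero_mulVec, add_zero, dotProduct_comm, hnum hCu]
  change √(lam ⬝ᵥ (E * K⁻¹ * Eᵀ) *ᵥ lam) = _
  rw [hM, hA.sqrt_dotProduct_mulVec_eq_iSup (fun w => C *ᵥ w = 0) hCu]
  exact iSup_congr fun w => by rw [hnum w.2.1]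
end

section
/- Let V and Q be real normed vector spaces and b : V × Q → ℝ bilinear with |b(u,p)| ≤ δ ‖u‖_V ‖p‖_Q for all u, p. Suppose Q = Q₀ ⊕ Q₁ and there exist constants β̂ > 0 and β₁ > 0 with β̂, β₁ ≤ δ such that: (i) for every p₀ ∈ Q₀, sup over nonzero u ∈ V of b(u, p₀)/‖u‖_V ≥ β̂ ‖p₀‖_Q, and moreover the supremum in (i) can be attained by elements u with b(u, p₁) = 0 for all p₁ ∈ Q₁; (ii) for every p₁ ∈ Q₁, sup over nonzero u ∈ V of b(u, p₁)/‖u‖_V ≥ β₁ ‖p₁‖_Q. Then for every p = p₀ + p₁ with p₀ ∈ Q₀, p₁ ∈ Q₁ and ‖p₀ + p₁‖_Q ≤ ‖p₀‖_Q + ‖p₁‖_Q, one has sup over nonzero u ∈ V of b(u, p)/‖u‖_V ≥ (β₁ β̂)/(δ + β₁ + β̂) ‖p‖_Q. -/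
/-!
Write `S` for the supremum attached to `p = p₀ + p₁`. The witness of (i) annihilates `Q₁`, so it
sees only `p₀` and gives `β̂ ‖p₀‖ ≤ S`. Splitting `b(u, p₁) = b(u, p) - b(u, p₀)` in (ii) and bounding
the second term by `δ ‖u‖ ‖p₀‖` gives `β₁ ‖p₁‖ ≤ S + δ ‖p₀‖`. Eliminating `‖p₀‖` between the two and
using `‖p‖ ≤ ‖p₀‖ + ‖p₁‖` yields `β₁ β̂ ‖p‖ ≤ (δ + β₁ + β̂) S`.
-/

section RatioSupremum

variable {V : Type*} [NormedAddCommGroup V] {f g : V → ℝ} {C : ℝ}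

theorem div_norm_le_of_le_mul_norm (hf : ∀ u, f u ≤ C * ‖u‖) (u : {u : V // u ≠ 0}) :
    f u / ‖(u : V)‖ ≤ C :=
  (div_le_iff₀ (norm_pos_iff.mpr u.2)).mpr (hf u)

theorem bddAbove_range_div_norm (hf : ∀ u, f u ≤ C * ‖u‖) :
    BddAbove (Set.range fun u : {u : V // u ≠ 0} => f u / ‖(u : V)‖) :=
  ⟨C, by rintro _ ⟨u, rfl⟩; exact div_norm_le_of_le_mul_norm hf u⟩

theorem le_iSup_div_norm (hbdd : BddAbove (Set.range fun u : {u : V // u ≠ 0} => f u / ‖(u : V)‖))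
    {u : V} (hu : u ≠ 0) (hfu : C * ‖u‖ ≤ f u) :
    C ≤ ⨆ v : {v : V // v ≠ 0}, f v / ‖(v : V)‖ :=
  ((le_div_iff₀ (norm_pos_iff.mpr hu)).mpr hfu).trans (le_ciSup hbdd ⟨u, hu⟩)

theorem iSup_div_norm_le_iSup_div_norm_add [Nonempty {u : V // u ≠ 0}]
    (hbdd : BddAbove (Set.range fun u : {u : V // u ≠ 0} => g u / ‖(u : V)‖))
    (hfg : ∀ u, f u ≤ g u + C * ‖u‖) :
    ⨆ u : {u : V // u ≠ 0}, f u / ‖(u : V)‖ ≤ (⨆ u : {u : V // u ≠ 0}, g u / ‖(u : V)‖) + C :=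
  ciSup_le fun u => by
    have hu : 0 < ‖(u : V)‖ := norm_pos_iff.mpr u.2
    calc f u / ‖(u : V)‖ ≤ g u / ‖(u : V)‖ + C := by
          rw [div_add' _ _ _ hu.ne', div_le_div_iff_of_pos_right hu]; exact hfg u
      _ ≤ _ := by gcongr; exact le_ciSup hbdd u

end RatioSupremum

theorem mul_le_of_split_inf_sup_bounds {S n n₀ n₁ δ β₀ β₁ : ℝ} (hβ₀ : 0 < β₀) (hβ₁ : 0 < β₁)
    (hδ : 0 ≤ δ) (h₀ : β₀ * n₀ ≤ S) (h₁ : β₁ * n₁ ≤ S + δ * n₀) (hn : n ≤ n₀ + n₁) :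
    β₁ * β₀ / (δ + β₁ + β₀) * n ≤ S := by
  have hden : 0 < δ + β₁ + β₀ := by positivity
  rw [div_mul_eq_mul_div, div_le_iff₀ hden]
  calc β₁ * β₀ * n ≤ β₁ * β₀ * (n₀ + n₁) := by gcongr
    _ = β₀ * (β₁ * n₀ + β₁ * n₁) := by ring
    _ ≤ β₀ * (S + (δ + β₁) * n₀) := mul_le_mul_of_nonneg_left (by linarith) hβ₀.le
    _ = β₀ * S + (δ + β₁) * (β₀ * n₀) := by ring
    _ ≤ β₀ * S + (δ + β₁) * S := by gcongr
    _ = S * (δ + β₁ + β₀) := by ring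

theorem stmt4_general {V Q : Type*} [NormedAddCommGroup V] [NormedSpace ℝ V]
    [NormedAddCommGroup Q] [NormedSpace ℝ Q]
    (b : V →ₗ[ℝ] Q →ₗ[ℝ] ℝ) (δ : ℝ)
    (hbdd : ∀ (u : V) (p : Q), |b u p| ≤ δ * ‖u‖ * ‖p‖)
    (Q0 Q1 : Submodule ℝ Q)
    (βhat β1 : ℝ) (hβhat : 0 < βhat) (hβ1 : 0 < β1)
    (hβ1δ : β1 ≤ δ)
    (hQ0 : ∀ p0 ∈ Q0, ∃ u : V, u ≠ 0 ∧ b u p0 ≥ βhat * ‖u‖ * ‖p0‖ ∧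
        ∀ p1 ∈ Q1, b u p1 = 0)
    (hQ1 : ∀ p1 ∈ Q1,
        (⨆ u : {u : V // u ≠ 0}, b (u : V) p1 / ‖(u : V)‖) ≥ β1 * ‖p1‖) :
    ∀ p0 ∈ Q0, ∀ p1 ∈ Q1, ‖p0 + p1‖ ≤ ‖p0‖ + ‖p1‖ →
      (⨆ u : {u : V // u ≠ 0}, b (u : V) (p0 + p1) / ‖(u : V)‖) ≥
        (β1 * βhat) / (δ + β1 + βhat) * ‖p0 + p1‖ := by
  intro p0 hp0 p1 hp1 htri
  obtain ⟨u, hu, hbu, hann⟩ := hQ0 p0 hp0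
  have : Nonempty {v : V // v ≠ 0} := ⟨⟨u, hu⟩⟩
  have hbddAbove := bddAbove_range_div_norm (f := fun v => b v (p0 + p1)) fun v =>
    (le_abs_self _).trans ((hbdd v _).trans_eq (mul_right_comm _ _ _))
  set S := ⨆ v : {v : V // v ≠ 0}, b (v : V) (p0 + p1) / ‖(v : V)‖
  have h₀ : βhat * ‖p0‖ ≤ S :=
    le_iSup_div_norm (f := fun v => b v (p0 + p1)) hbddAbove hu <| by
      simp only [map_add, hann p1 hp1, add_zero]; linarith
  have h₁ : β1 * ‖p1‖ ≤ S + δ * ‖p0‖ :=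
    (hQ1 p1 hp1).trans <| iSup_div_norm_le_iSup_div_norm_add
      (f := fun v => b v p1) (g := fun v => b v (p0 + p1)) hbddAbove fun v => by
        have := neg_le_of_abs_le (hbdd v p0)
        simp only [map_add]; linarith
  exact mul_le_of_split_inf_sup_bounds hβhat hβ1 (hβ1.le.trans hβ1δ) h₀ h₁ htri

theorem stmt4 {V Q : Type*} [NormedAddCommGroup V] [NormedSpace ℝ V]
    [NormedAddCommGroup Q] [NormedSpace ℝ Q]
    (b : V →ₗ[ℝ] Q →ₗ[ℝ] ℝ) (δ : ℝ)
    (hbdd : ∀ (u : V) (p : Q), |b u p| ≤ δ * ‖u‖ * ‖p‖)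
    (Q0 Q1 : Submodule ℝ Q) (hcompl : IsCompl Q0 Q1)
    (βhat β1 : ℝ) (hβhat : 0 < βhat) (hβ1 : 0 < β1)
    (hβhatδ : βhat ≤ δ) (hβ1δ : β1 ≤ δ)
    (hQ0 : ∀ p0 ∈ Q0, ∃ u : V, u ≠ 0 ∧ b u p0 ≥ βhat * ‖u‖ * ‖p0‖ ∧
        ∀ p1 ∈ Q1, b u p1 = 0)
    (hQ1 : ∀ p1 ∈ Q1,
        (⨆ u : {u : V // u ≠ 0}, b (u : V) p1 / ‖(u : V)‖) ≥ β1 * ‖p1‖) :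
    ∀ p0 ∈ Q0, ∀ p1 ∈ Q1, ‖p0 + p1‖ ≤ ‖p0‖ + ‖p1‖ →
      (⨆ u : {u : V // u ≠ 0}, b (u : V) (p0 + p1) / ‖(u : V)‖) ≥
        (β1 * βhat) / (δ + β1 + βhat) * ‖p0 + p1‖ :=
  stmt4_general b δ hbdd Q0 Q1 βhat β1 hβhat hβ1 hβ1δ hQ0 hQ1
end

section
/- Let K_{II} be symmetric positive definite, D_I, D_Γ, C_A matrices with D_Iᵀ𝟙 = 0, C_A𝟙 = 1 (where 𝟙 is the all-ones vector of appropriate size), and set W := D_I K_{II}⁻¹ D_Iᵀ + C_Aᵀ C_A. Assume W is invertible. Then the inverse of the block matrix [[K_{II}, D_Iᵀ, 0],[D_I, 0, C_Aᵀ],[0, C_A, 0]] is [[K_{II}⁻¹ − K_{II}⁻¹D_IᵀW⁻¹D_IK_{II}⁻¹, K_{II}⁻¹D_IᵀW⁻¹, 0],[W⁻¹D_IK_{II}⁻¹, 𝟙𝟙ᵀ − W⁻¹, 𝟙],[0, 𝟙ᵀ, 0]]. -/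
/-!
Eliminating `K_II` by its Schur complement reduces the claim to inverting
`S = [[-M, C_Aᵀ], [C_A, 0]]` with `M = D_I K_II⁻¹ D_Iᵀ`, so that `W = M + C_AᵀC_A`.
Since `D_Iᵀ𝟙 = 0`, both `M𝟙` and `𝟙ᵀM` vanish, hence `𝟙ᵀW = C_A` and `C_A W⁻¹ = 𝟙ᵀ`;
this identity makes `[[𝟙𝟙ᵀ - W⁻¹, 𝟙], [𝟙ᵀ, 0]]` a right inverse of `S`. In the
Schur complement formula the all-ones blocks are then annihilated by `D_I` and `D_Iᵀ`.
-/

open Matrix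

namespace Matrix

section ones

variable {l m n p R : Type*} [NonAssocSemiring R] [Fintype m]

theorem mul_ones_eq_zero {A : Matrix l m R} (h : A *ᵥ (fun _ => 1) = 0) :
    A * (of fun _ _ => 1 : Matrix m p R) = 0 := by
  ext i j; exact congrFun h i

theorem ones_mul_eq_zero {A : Matrix m n R} (h : (fun _ => 1) ᵥ* A = 0) :
    (of fun _ _ => 1 : Matrix p m R) * A = 0 := by
  ext i j; exact congrFun h j

theorem mul_ones_eq_ones {A : Matrix l m R} (h : A *ᵥ (fun _ => 1) = fun _ => 1) :
    A * (of fun _ _ => 1 : Matrix m p R) = of fun _ _ => 1 := by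
  ext i j; exact congrFun h i

theorem ones_mul_eq_ones {A : Matrix m n R} (h : (fun _ => 1) ᵥ* A = fun _ => 1) :
    (of fun _ _ => 1 : Matrix p m R) * A = of fun _ _ => 1 := by
  ext i j; exact congrFun h j

omit [Fintype m] in
theorem ones_eq_one_of_unique [Unique m] [DecidableEq m] :
    (of fun _ _ => 1 : Matrix m m R) = 1 := by
  ext i j
  rw [Subsingleton.elim i j]
  simp

end ones

variable {m n R : Type*} [CommRing R] [Fintype m] [Fintype n] [DecidableEq m] [DecidableEq n]

theorem inv_fromBlocks_of_isUnit₁₁ (A : Matrix m m R) (B : Matrix m n R) (C : Matrix n m R)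
    (D : Matrix n n R) (hA : IsUnit A) (hS : IsUnit (D - C * A⁻¹ * B)) :
    (fromBlocks A B C D)⁻¹ =
      fromBlocks (A⁻¹ + A⁻¹ * B * (D - C * A⁻¹ * B)⁻¹ * C * A⁻¹)
        (-(A⁻¹ * B * (D - C * A⁻¹ * B)⁻¹)) (-((D - C * A⁻¹ * B)⁻¹ * C * A⁻¹))
        (D - C * A⁻¹ * B)⁻¹ := by
  obtain ⟨_⟩ := hA.nonempty_invertible
  simp_rw [← invOf_eq_nonsing_inv] at hS ⊢
  obtain ⟨_⟩ := hS.nonempty_invertible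
  let := fromBlocks₁₁Invertible A B C D
  rw [← invOf_eq_nonsing_inv, invOf_fromBlocks₁₁_eq]
  simp only [invOf_eq_nonsing_inv]

theorem fromBlocks_neg_transpose_mul_eq_one {M : Matrix m m R} {C : Matrix (Fin 1) m R}
    (hM_ones : M *ᵥ (fun _ => 1) = 0) (hones_M : (fun _ => 1) ᵥ* M = 0)
    (hC : C *ᵥ (fun _ => 1) = fun _ => 1) (hW : IsUnit (M + Cᵀ * C).det) :
    fromBlocks (-M) Cᵀ C 0 *
        fromBlocks ((of fun _ _ => 1) - (M + Cᵀ * C)⁻¹) (of fun _ _ => 1) (of fun _ _ => 1) 0 =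
      1 := by
  set W := M + Cᵀ * C
  have hCt : (fun _ => 1) ᵥ* Cᵀ = fun _ => 1 := by rwa [vecMul_transpose]
  have hW_row : (of fun _ _ => 1 : Matrix (Fin 1) m R) * W = C := by
    rw [Matrix.mul_add, ones_mul_eq_zero hones_M, ← Matrix.mul_assoc, ones_mul_eq_ones hCt,
      ones_eq_one_of_unique, Matrix.one_mul, zero_add]
  have hC_Winv : C * W⁻¹ = of fun _ _ => 1 := by
    rw [← hW_row, Matrix.mul_assoc, mul_nonsing_inv _ hW, Matrix.mul_one]
  have hM_Winv : M * W⁻¹ = 1 - Cᵀ * (of fun _ _ => 1 : Matrix (Fin 1) m R) := by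
    rw [eq_sub_iff_add_eq, ← hC_Winv, ← Matrix.mul_assoc, ← Matrix.add_mul, mul_nonsing_inv _ hW]
  rw [fromBlocks_multiply, ← fromBlocks_one]
  congr 1
  · rw [Matrix.neg_mul, Matrix.mul_sub, mul_ones_eq_zero hM_ones, hM_Winv]; abel
  · rw [Matrix.neg_mul, mul_ones_eq_zero hM_ones]; simp
  · rw [Matrix.mul_sub, mul_ones_eq_ones hC, hC_Winv]; simp
  · rw [mul_ones_eq_ones hC, ones_eq_one_of_unique]; simp

end Matrix

theorem stmt8 {nI m : ℕ}
    (KII : Matrix (Fin nI) (Fin nI) ℝ) (DI : Matrix (Fin m) (Fin nI) ℝ)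
    (CA : Matrix (Fin 1) (Fin m) ℝ)
    (hKII : KII.PosDef)
    (hDI : DIᵀ *ᵥ (fun _ => (1 : ℝ)) = 0)
    (hCA : CA *ᵥ (fun _ => (1 : ℝ)) = fun _ => (1 : ℝ))
    (hW : IsUnit (DI * KII⁻¹ * DIᵀ + CAᵀ * CA).det) :
    (Matrix.fromBlocks KII (Matrix.fromCols DIᵀ (0 : Matrix (Fin nI) (Fin 1) ℝ))
        (Matrix.fromRows DI (0 : Matrix (Fin 1) (Fin nI) ℝ))
        (Matrix.fromBlocks (0 : Matrix (Fin m) (Fin m) ℝ) CAᵀ CA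
          (0 : Matrix (Fin 1) (Fin 1) ℝ)))⁻¹ =
      Matrix.fromBlocks
        (KII⁻¹ - KII⁻¹ * DIᵀ * (DI * KII⁻¹ * DIᵀ + CAᵀ * CA)⁻¹ * DI * KII⁻¹)
        (Matrix.fromCols (KII⁻¹ * DIᵀ * (DI * KII⁻¹ * DIᵀ + CAᵀ * CA)⁻¹)
          (0 : Matrix (Fin nI) (Fin 1) ℝ))
        (Matrix.fromRows ((DI * KII⁻¹ * DIᵀ + CAᵀ * CA)⁻¹ * DI * KII⁻¹)
          (0 : Matrix (Fin 1) (Fin nI) ℝ))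
        (Matrix.fromBlocks
          ((Matrix.of fun _ _ => (1 : ℝ)) - (DI * KII⁻¹ * DIᵀ + CAᵀ * CA)⁻¹)
          (Matrix.of fun (_ : Fin m) (_ : Fin 1) => (1 : ℝ))
          (Matrix.of fun (_ : Fin 1) (_ : Fin m) => (1 : ℝ))
          (0 : Matrix (Fin 1) (Fin 1) ℝ)) := by
  have hK : IsUnit KII := (isUnit_iff_isUnit_det _).2 hKII.det_pos.ne'.isUnit
  have hDI' : (fun _ => 1) ᵥ* DI = 0 := by rw [← mulVec_transpose, hDI]
  have hSchur : fromBlocks 0 CAᵀ CA 0 - fromRows DI 0 * KII⁻¹ * fromCols DIᵀ 0 =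
      fromBlocks (-(DI * KII⁻¹ * DIᵀ)) CAᵀ CA (0 : Matrix (Fin 1) (Fin 1) ℝ) := by
    rw [fromRows_mul, fromRows_mul_fromCols, sub_eq_add_neg, fromBlocks_neg, fromBlocks_add]
    simp
  have hS_mul := fromBlocks_neg_transpose_mul_eq_one
    (by rw [← mulVec_mulVec, ← mulVec_mulVec, hDI, mulVec_zero, mulVec_zero])
    (by rw [← vecMul_vecMul, ← vecMul_vecMul, hDI', zero_vecMul, zero_vecMul]) hCA hW
  rw [inv_fromBlocks_of_isUnit₁₁ _ _ _ _ hK, hSchur, inv_eq_right_inv hS_mul]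
  · simp only [mul_fromCols, fromCols_mul_fromBlocks, fromBlocks_mul_fromRows,
      fromCols_mul_fromRows, fromRows_mul, Matrix.mul_sub, Matrix.sub_mul, Matrix.mul_assoc,
      mul_ones_eq_zero hDI, ones_mul_eq_zero hDI', Matrix.mul_zero, Matrix.zero_mul, add_zero,
      zero_sub, Matrix.neg_mul, ← sub_eq_add_neg]
    simp
  · rw [hSchur, isUnit_iff_isUnit_det]; exact isUnit_det_of_right_inverse hS_mul
end

section
/- Let B be a matrix and D a symmetric positive definite matrix satisfying B D⁻¹ Bᵀ B = B. Let M := B D⁻¹ S D⁻¹ Bᵀ be SPD on the range of B for an SPD matrix S, and suppose for some λ₁ in the range of the map w ↦ M B w (over w in a subspace W̃) and constants c > 0: ‖D⁻¹BᵀBw‖_S ≤ c ‖w‖_S for all w ∈ W̃ with D⁻¹BᵀBw ∈ W̃. Then √(λ₁ᵀ M⁻¹ λ₁) ≤ sup over w ∈ W̃ \ ker B of (BD⁻¹BᵀBw, λ₁)/‖D⁻¹BᵀBw‖_S. -/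
open Matrix

/-! With `K = D⁻¹BᵀB` and `M = BD⁻¹SD⁻¹Bᵀ`, symmetry of `D` gives
`(Bx)ᵀ M (By) = (Kx)ᵀ S (Ky)`, and `BK = B` by the hypothesis `BD⁻¹BᵀB = B`.
Hence for `λ₁ = M B w₀` the quotient at `w` equals `(Kw)ᵀ S (Kw₀) / ‖Kw‖_S`, which is
at most `‖Kw₀‖_S` by Cauchy–Schwarz and equals it at `w = w₀`; while
`λ₁ᵀ M⁻¹ λ₁ = ‖Kw₀‖_S²` when `M` is invertible and `0` otherwise. -/

section CauchySchwarz

variable {ι : Type*} [Fintype ι]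

lemma Matrix.dotProduct_le_sqrt_mul_sqrt (x y : ι → ℝ) :
    x ⬝ᵥ y ≤ √(x ⬝ᵥ x) * √(y ⬝ᵥ y) := by
  simpa only [dotProduct, sq] using Real.sum_mul_le_sqrt_mul_sqrt Finset.univ x y

open scoped MatrixOrder in
lemma Matrix.PosSemidef.dotProduct_mulVec_le_sqrt_mul_sqrt {S : Matrix ι ι ℝ}
    (hS : S.PosSemidef) (x y : ι → ℝ) :
    x ⬝ᵥ S *ᵥ y ≤ √(x ⬝ᵥ S *ᵥ x) * √(y ⬝ᵥ S *ᵥ y) := by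
  classical
  obtain ⟨Y, rfl⟩ := CStarAlgebra.nonneg_iff_eq_star_mul_self.mp hS.nonneg
  have hY (u v : ι → ℝ) : u ⬝ᵥ (star Y * Y) *ᵥ v = (Y *ᵥ u) ⬝ᵥ (Y *ᵥ v) := by
    rw [← mulVec_mulVec, dotProduct_mulVec, star_eq_conjTranspose,
      conjTranspose_eq_transpose_of_trivial, vecMul_transpose]
  simpa only [hY] using dotProduct_le_sqrt_mul_sqrt (Y *ᵥ x) (Y *ᵥ y)

lemma Matrix.PosSemidef.dotProduct_mulVec_div_sqrt_le_s15 {S : Matrix ι ι ℝ}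
    (hS : S.PosSemidef) (u v : ι → ℝ) :
    (v ⬝ᵥ S *ᵥ u) / √(v ⬝ᵥ S *ᵥ v) ≤ √(u ⬝ᵥ S *ᵥ u) :=
  div_le_of_le_mul₀ (Real.sqrt_nonneg _) (Real.sqrt_nonneg _) <|
    mul_comm (√(u ⬝ᵥ S *ᵥ u)) _ ▸ hS.dotProduct_mulVec_le_sqrt_mul_sqrt v u

end CauchySchwarz

lemma Real.iSup_nonneg_of_exists_neg {ι : Sort*} (f : ι → ℝ) (h : ∀ i, ∃ j, f j = -f i) :
    0 ≤ ⨆ i, f i := by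
  rcases isEmpty_or_nonempty ι with hι | ⟨⟨i⟩⟩
  · rw [Real.iSup_of_isEmpty]
  by_cases hf : BddAbove (Set.range f)
  · obtain ⟨j, hj⟩ := h i
    rcases le_total 0 (f i) with hi | hi
    · exact hi.trans (le_ciSup hf i)
    · exact (hj ▸ neg_nonneg.mpr hi).trans (le_ciSup hf j)
  · rw [Real.iSup_of_not_bddAbove hf]

lemma Matrix.dotProduct_transpose_mul_mul_mulVec {R m k : Type*} [CommSemiring R]
    [Fintype m] [Fintype k] (C : Matrix m k R) (P : Matrix m m R) (x y : k → R) :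
    x ⬝ᵥ (Cᵀ * P * C) *ᵥ y = (C *ᵥ x) ⬝ᵥ P *ᵥ (C *ᵥ y) := by
  rw [← mulVec_mulVec, ← mulVec_mulVec, dotProduct_mulVec, vecMul_transpose]

lemma Matrix.IsSymm.mulVec_dotProduct_mulVec_mulVec_eq {R m k : Type*} [CommSemiring R]
    [Fintype m] [Fintype k] (B : Matrix m k R) {P : Matrix k k R} (hP : P.IsSymm)
    (S : Matrix k k R) (x y : k → R) :
    (B *ᵥ x) ⬝ᵥ (B * P * S * P * Bᵀ) *ᵥ (B *ᵥ y) =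
      ((P * Bᵀ * B) *ᵥ x) ⬝ᵥ S *ᵥ ((P * Bᵀ * B) *ᵥ y) := by
  have hBt : (P * Bᵀ * B)ᵀ * S * (P * Bᵀ * B) = Bᵀ * (B * P * S * P * Bᵀ) * B := by
    simp only [transpose_mul, transpose_transpose, hP.eq, Matrix.mul_assoc]
  rw [← dotProduct_transpose_mul_mul_mulVec, ← hBt, dotProduct_transpose_mul_mul_mulVec]

theorem stmt15_general {N n : ℕ}
    (B : Matrix (Fin N) (Fin n) ℝ) (D S : Matrix (Fin n) (Fin n) ℝ)
    (hD : D.PosDef) (hS : S.PosDef)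
    (hBD : B * D⁻¹ * Bᵀ * B = B)
    (Wt : Submodule ℝ (Fin n → ℝ))
    (lam1 : Fin N → ℝ)
    (hlam1 : ∃ w ∈ Wt, lam1 = (B * D⁻¹ * S * D⁻¹ * Bᵀ) *ᵥ (B *ᵥ w)) :
    Real.sqrt (lam1 ⬝ᵥ (B * D⁻¹ * S * D⁻¹ * Bᵀ)⁻¹ *ᵥ lam1) ≤
      ⨆ w : {w : Fin n → ℝ // w ∈ Wt ∧ B *ᵥ w ≠ 0},
        ((B *ᵥ ((D⁻¹ * Bᵀ * B) *ᵥ (w : Fin n → ℝ))) ⬝ᵥ lam1) /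
          Real.sqrt (((D⁻¹ * Bᵀ * B) *ᵥ (w : Fin n → ℝ)) ⬝ᵥ S *ᵥ
            ((D⁻¹ * Bᵀ * B) *ᵥ (w : Fin n → ℝ))) := by
  obtain ⟨w₀, hw₀, rfl⟩ := hlam1
  set M := B * D⁻¹ * S * D⁻¹ * Bᵀ
  set K := D⁻¹ * Bᵀ * B
  have hM (x y : Fin n → ℝ) :
      (B *ᵥ x) ⬝ᵥ M *ᵥ (B *ᵥ y) = (K *ᵥ x) ⬝ᵥ S *ᵥ (K *ᵥ y) :=
    (isHermitian_iff_isSymm.mp hD.isHermitian).inv.mulVec_dotProduct_mulVec_mulVec_eq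
      B S x y
  have hBK (x : Fin n → ℝ) : B *ᵥ (K *ᵥ x) = B *ᵥ x := by
    rw [mulVec_mulVec, show B * K = B by simpa only [K, Matrix.mul_assoc] using hBD]
  have hquot (w : Fin n → ℝ) :
      (B *ᵥ (K *ᵥ w)) ⬝ᵥ M *ᵥ (B *ᵥ w₀) / √((K *ᵥ w) ⬝ᵥ S *ᵥ (K *ᵥ w)) ≤
        √((K *ᵥ w₀) ⬝ᵥ S *ᵥ (K *ᵥ w₀)) := by
    rw [hBK, hM]; exact hS.posSemidef.dotProduct_mulVec_div_sqrt_le_s15 _ _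
  have hlhs : √((M *ᵥ (B *ᵥ w₀)) ⬝ᵥ M⁻¹ *ᵥ (M *ᵥ (B *ᵥ w₀))) ≤
      √((K *ᵥ w₀) ⬝ᵥ S *ᵥ (K *ᵥ w₀)) := by
    by_cases hMu : IsUnit M.det
    · rw [mulVec_mulVec _ M⁻¹, nonsing_inv_mul M hMu, one_mulVec, dotProduct_comm, hM]
    · rw [nonsing_inv_apply_not_isUnit M hMu, zero_mulVec, dotProduct_zero, Real.sqrt_zero]
      exact Real.sqrt_nonneg _
  refine hlhs.trans ?_
  by_cases hBw₀ : B *ᵥ w₀ = 0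
  · have hKw₀ : K *ᵥ w₀ = 0 := by simp only [K, ← mulVec_mulVec, hBw₀, mulVec_zero]
    rw [hKw₀, zero_dotProduct, Real.sqrt_zero]
    refine Real.iSup_nonneg_of_exists_neg _ fun ⟨w, hwW, hwB⟩ => ?_
    refine ⟨⟨-w, neg_mem hwW, by rwa [mulVec_neg, neg_ne_zero]⟩, ?_⟩
    simp only [mulVec_neg, dotProduct_neg, neg_dotProduct, neg_neg, neg_div]
  · refine le_ciSup_of_le ⟨_, Set.forall_mem_range.mpr fun w => hquot w.1⟩
      ⟨w₀, hw₀, hBw₀⟩ ?_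
    rw [hBK, hM, Real.div_sqrt]

theorem stmt15 {N n : ℕ}
    (B : Matrix (Fin N) (Fin n) ℝ) (D S : Matrix (Fin n) (Fin n) ℝ)
    (hD : D.PosDef) (hS : S.PosDef)
    (hBD : B * D⁻¹ * Bᵀ * B = B)
    (Wt : Submodule ℝ (Fin n → ℝ))
    (hMpos : ∀ μ : Fin N → ℝ, μ ∈ Set.range (B.mulVec) → μ ≠ 0 →
        0 < μ ⬝ᵥ (B * D⁻¹ * S * D⁻¹ * Bᵀ) *ᵥ μ)
    (c : ℝ) (hc : 0 < c)
    (hstab : ∀ w ∈ Wt, (D⁻¹ * Bᵀ * B) *ᵥ w ∈ Wt →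
        Real.sqrt (((D⁻¹ * Bᵀ * B) *ᵥ w) ⬝ᵥ S *ᵥ ((D⁻¹ * Bᵀ * B) *ᵥ w)) ≤
          c * Real.sqrt (w ⬝ᵥ S *ᵥ w))
    (lam1 : Fin N → ℝ)
    (hlam1 : ∃ w ∈ Wt, lam1 = (B * D⁻¹ * S * D⁻¹ * Bᵀ) *ᵥ (B *ᵥ w)) :
    Real.sqrt (lam1 ⬝ᵥ (B * D⁻¹ * S * D⁻¹ * Bᵀ)⁻¹ *ᵥ lam1) ≤
      ⨆ w : {w : Fin n → ℝ // w ∈ Wt ∧ B *ᵥ w ≠ 0},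
        ((B *ᵥ ((D⁻¹ * Bᵀ * B) *ᵥ (w : Fin n → ℝ))) ⬝ᵥ lam1) /
          Real.sqrt (((D⁻¹ * Bᵀ * B) *ᵥ (w : Fin n → ℝ)) ⬝ᵥ S *ᵥ
            ((D⁻¹ * Bᵀ * B) *ᵥ (w : Fin n → ℝ))) :=
  stmt15_general B D S hD hS hBD Wt lam1 hlam1
end

section
/- Let V₀, V₁ be subspaces of a normed space with projections Π_SZ : H → V₁ satisfying |Π_SZ u| ≤ c_S |u| and Σ_k H_k⁻² ‖(I−Π_SZ)u‖²_{L²(Ω_k)} ≤ c_S |u|², and Π_F̃ : H → V satisfying |Π_F̃ v|² ≤ c̃ Σ_k (H_k⁻²‖v‖²_{L²(Ω_k)} + |v|²_{H¹(Ω_k)}) and b((I−Π_F̃)v, p) = 0 for all p ∈ Q₁. Then Π := Π_SZ + Π_F̃(I−Π_SZ) satisfies |Πu|² ≤ (2c_S² + 2c̃(c_S + (1+c_S)²)) |u|² and b((I−Π)u, p) = 0 for all u ∈ H, p ∈ Q₁, where |·| denotes the H¹-seminorm and |u|² = Σ_k |u|²_{H¹(Ω_k)}. -/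
/-!
Write `E u = |u|²`. The Scott–Zhang step gives `|Π_SZ u|² ≤ c_S² |u|²` and, by the triangle
inequality, `|(I - Π_SZ) u|² ≤ (1 + c_S)² |u|²`. Feeding `(I - Π_SZ) u` into the scaled-`L²`
stability of `Π_F̃` and using the approximation property of `Π_SZ` on its `L²` part bounds
`|Π_F̃ (I - Π_SZ) u|²` by `c̃ (c_S + (1 + c_S)²) |u|²`; `|a + b|² ≤ 2|a|² + 2|b|²` combines the two.
Orthogonality holds because `I - Π = (I - Π_F̃)(I - Π_SZ)`.
-/

namespace Real

lemma le_mul_sq_of_sqrt_le_mul_sqrt {a b c : ℝ} (hb : 0 ≤ b) (h : √a ≤ c * √b) :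
    a ≤ c ^ 2 * b := by
  simpa only [mul_pow, sq_sqrt hb] using (sqrt_le_iff.1 h).2

lemma le_two_mul_add_of_sqrt_le_add {a x y : ℝ} (hx : 0 ≤ x) (hy : 0 ≤ y)
    (h : √a ≤ √x + √y) : a ≤ 2 * (x + y) :=
  calc a ≤ (√x + √y) ^ 2 := (sqrt_le_iff.1 h).2
    _ ≤ 2 * (√x ^ 2 + √y ^ 2) := add_sq_le
    _ = 2 * (x + y) := by rw [sq_sqrt hx, sq_sqrt hy]

end Real

section FortinComposition

variable {H : Type*} [AddCommGroup H] {E : H → ℝ}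

lemma sqrt_energy_sub_le (hE_add : ∀ u v, √(E (u + v)) ≤ √(E u) + √(E v))
    (hE_neg : ∀ u, E (-u) = E u) (u v : H) : √(E (u - v)) ≤ √(E u) + √(E v) := by
  simpa only [sub_eq_add_neg, hE_neg] using hE_add u (-v)

lemma energy_sub_apply_le (hE_nonneg : ∀ u, 0 ≤ E u)
    (hE_add : ∀ u v, √(E (u + v)) ≤ √(E u) + √(E v)) (hE_neg : ∀ u, E (-u) = E u)
    {P : H → H} {c : ℝ} (hP : ∀ u, √(E (P u)) ≤ c * √(E u)) (u : H) :
    E (u - P u) ≤ (1 + c) ^ 2 * E u := by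
  refine Real.le_mul_sq_of_sqrt_le_mul_sqrt (hE_nonneg u) ?_
  calc √(E (u - P u)) ≤ √(E u) + √(E (P u)) := sqrt_energy_sub_le hE_add hE_neg u (P u)
    _ ≤ √(E u) + c * √(E u) := by gcongr; exact hP u
    _ = (1 + c) * √(E u) := by ring

/-- `L` is the scaled `L²` term `Σ_k H_k⁻² ‖·‖²_{L²(Ω_k)}`. -/
lemma energy_add_correction_le (hE_nonneg : ∀ u, 0 ≤ E u)
    (hE_add : ∀ u v, √(E (u + v)) ≤ √(E u) + √(E v)) (hE_neg : ∀ u, E (-u) = E u)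
    {L : H → ℝ} {P F : H → H} {cS ct : ℝ} (hct : 0 ≤ ct)
    (hP_stab : ∀ u, √(E (P u)) ≤ cS * √(E u)) (hP_approx : ∀ u, L (u - P u) ≤ cS * E u)
    (hF_stab : ∀ v, E (F v) ≤ ct * (L v + E v)) (u : H) :
    E (P u + F (u - P u)) ≤ (2 * cS ^ 2 + 2 * ct * (cS + (1 + cS) ^ 2)) * E u := by
  have hP : E (P u) ≤ cS ^ 2 * E u :=
    Real.le_mul_sq_of_sqrt_le_mul_sqrt (hE_nonneg u) (hP_stab u)
  have hF : E (F (u - P u)) ≤ ct * (cS + (1 + cS) ^ 2) * E u :=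
    calc E (F (u - P u)) ≤ ct * (L (u - P u) + E (u - P u)) := hF_stab _
      _ ≤ ct * (cS * E u + (1 + cS) ^ 2 * E u) := by
          gcongr
          · exact hP_approx u
          · exact energy_sub_apply_le hE_nonneg hE_add hE_neg hP_stab u
      _ = ct * (cS + (1 + cS) ^ 2) * E u := by ring
  calc E (P u + F (u - P u)) ≤ 2 * (E (P u) + E (F (u - P u))) :=
        Real.le_two_mul_add_of_sqrt_le_add (hE_nonneg _) (hE_nonneg _) (hE_add _ _)
    _ ≤ 2 * (cS ^ 2 * E u + ct * (cS + (1 + cS) ^ 2) * E u) := by gcongr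
    _ = (2 * cS ^ 2 + 2 * ct * (cS + (1 + cS) ^ 2)) * E u := by ring

lemma sub_add_correction (P F : H → H) (u : H) :
    u - (P u + F (u - P u)) = (u - P u) - F (u - P u) := by
  abel

end FortinComposition

theorem stmt19_general {H Q : Type*} [AddCommGroup H] [Module ℝ H]
    [AddCommGroup Q] [Module ℝ Q]
    {K : ℕ}
    (Jloc L2loc : Fin K → H → ℝ) (Hk : Fin K → ℝ)
    (hJtri : ∀ u v : H,
        Real.sqrt (∑ k, (Jloc k (u + v)) ^ 2) ≤
          Real.sqrt (∑ k, (Jloc k u) ^ 2) + Real.sqrt (∑ k, (Jloc k v) ^ 2))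
    (hJneg : ∀ (k : Fin K) (u : H), Jloc k (-u) = Jloc k u)
    (PSZ PF : H →ₗ[ℝ] H) (b : H →ₗ[ℝ] Q →ₗ[ℝ] ℝ) (Q1 : Submodule ℝ Q)
    (cS ct : ℝ) (hct : 0 ≤ ct)
    (hSZstab : ∀ u : H,
        Real.sqrt (∑ k, (Jloc k (PSZ u)) ^ 2) ≤ cS * Real.sqrt (∑ k, (Jloc k u) ^ 2))
    (hSZapprox : ∀ u : H,
        (∑ k, ((Hk k)⁻¹) ^ 2 * (L2loc k (u - PSZ u)) ^ 2) ≤ cS * ∑ k, (Jloc k u) ^ 2)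
    (hFstab : ∀ v : H,
        (∑ k, (Jloc k (PF v)) ^ 2) ≤
          ct * ∑ k, (((Hk k)⁻¹) ^ 2 * (L2loc k v) ^ 2 + (Jloc k v) ^ 2))
    (hForth : ∀ v : H, ∀ p ∈ Q1, b (v - PF v) p = 0) :
    ∀ u : H,
      (∑ k, (Jloc k (PSZ u + PF (u - PSZ u))) ^ 2) ≤
          (2 * cS ^ 2 + 2 * ct * (cS + (1 + cS) ^ 2)) * ∑ k, (Jloc k u) ^ 2 ∧
        ∀ p ∈ Q1, b (u - (PSZ u + PF (u - PSZ u))) p = 0 := by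
  intro u
  refine ⟨energy_add_correction_le (E := fun v => ∑ k, (Jloc k v) ^ 2)
    (fun _ => Finset.sum_nonneg fun _ _ => sq_nonneg _) hJtri
    (fun _ => by simp only [hJneg]) hct hSZstab hSZapprox
    (fun v => by simpa only [Finset.sum_add_distrib] using hFstab v) u, fun p hp => ?_⟩
  rw [sub_add_correction]
  exact hForth _ p hp

theorem stmt19 {H Q : Type*} [AddCommGroup H] [Module ℝ H]
    [AddCommGroup Q] [Module ℝ Q]
    {K : ℕ}
    (Jloc L2loc : Fin K → H → ℝ) (Hk : Fin K → ℝ) (hHk : ∀ k, 0 < Hk k)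
    (hJnonneg : ∀ k u, 0 ≤ Jloc k u)
    (hL2nonneg : ∀ k u, 0 ≤ L2loc k u)
    (hJtri : ∀ u v : H,
        Real.sqrt (∑ k, (Jloc k (u + v)) ^ 2) ≤
          Real.sqrt (∑ k, (Jloc k u) ^ 2) + Real.sqrt (∑ k, (Jloc k v) ^ 2))
    (hJneg : ∀ (k : Fin K) (u : H), Jloc k (-u) = Jloc k u)
    (PSZ PF : H →ₗ[ℝ] H) (b : H →ₗ[ℝ] Q →ₗ[ℝ] ℝ) (Q1 : Submodule ℝ Q)
    (cS ct : ℝ) (hcS : 0 ≤ cS) (hct : 0 ≤ ct)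
    (hSZstab : ∀ u : H,
        Real.sqrt (∑ k, (Jloc k (PSZ u)) ^ 2) ≤ cS * Real.sqrt (∑ k, (Jloc k u) ^ 2))
    (hSZapprox : ∀ u : H,
        (∑ k, ((Hk k)⁻¹) ^ 2 * (L2loc k (u - PSZ u)) ^ 2) ≤ cS * ∑ k, (Jloc k u) ^ 2)
    (hFstab : ∀ v : H,
        (∑ k, (Jloc k (PF v)) ^ 2) ≤
          ct * ∑ k, (((Hk k)⁻¹) ^ 2 * (L2loc k v) ^ 2 + (Jloc k v) ^ 2))
    (hForth : ∀ v : H, ∀ p ∈ Q1, b (v - PF v) p = 0) :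
    ∀ u : H,
      (∑ k, (Jloc k (PSZ u + PF (u - PSZ u))) ^ 2) ≤
          (2 * cS ^ 2 + 2 * ct * (cS + (1 + cS) ^ 2)) * ∑ k, (Jloc k u) ^ 2 ∧
        ∀ p ∈ Q1, b (u - (PSZ u + PF (u - PSZ u))) p = 0 :=
  stmt19_general Jloc L2loc Hk hJtri hJneg PSZ PF b Q1 cS ct hct hSZstab hSZapprox hFstab hForth
end
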